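/- arXiv:2603.22463 — 3 statements merged into one kernel-verified Lean document; each statement's English description precedes it below -/
import Mathlib

section
/- Assume there exists t₀ ≥ 1 with [S]^{t₀}(1_{T^{≤t₀}}·w_{t₀}) > 0, and assume μ^∞(T_f) = 1. Let f be a prefix-closed function with branches (L_j)_{j≥0} and f ≤ M with M < ∞. Then, as t → ∞, both the lower bound [S]ᵗ(f_t·1_{L^{≤t}∩T^{≤t}}·w_t)/[S]ᵗw_t and the upper bound ([S]ᵗ(f_t·1_{L^{≤t}∩T^{≤t}}·w_t)/[S]ᵗw_t)·α_t + M·(α_t − 1), where α_t := [S]ᵗw_t/[S]ᵗ(1_{T^{≤t}}·w_t), converge to ⟦S⟧f. -/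
open MeasureTheory ProbabilityTheory Filter Set
open scoped ENNReal

namespace PaperPPG

variable {Ω : Type*} [MeasurableSpace Ω]

/-- Concatenation of a finite word with an infinite sequence. -/
def cat {j : ℕ} (u : Fin j → Ω) (ω : ℕ → Ω) : ℕ → Ω :=
  fun n => if h : n < j then u ⟨n, h⟩ else ω (n - j)

/-- Extension of a finite word by the constant `star`. -/
def extendW (star : Ω) {j : ℕ} (u : Fin j → Ω) : ℕ → Ω :=
  fun n => if h : n < j then u ⟨n, h⟩ else star

/-- First `t` letters of an infinite sequence. -/
def take (t : ℕ) (ω : ℕ → Ω) : Fin t → Ω := fun i => ω i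

/-- Cylinder generated by a set of words of length `j`. -/
def cyl {j : ℕ} (B : Set (Fin j → Ω)) : Set (ℕ → Ω) := {ω | take j ω ∈ B}

/-- `u` is a prefix of `v`. -/
def IsPref {i j : ℕ} (u : Fin i → Ω) (v : Fin j → Ω) : Prop :=
  ∃ h : i ≤ j, ∀ k : Fin i, u k = v (Fin.castLE h k)

/-- A sequence of languages, `L j ⊆ Ω^j`, is prefix-free. -/
def PrefixFree (L : (j : ℕ) → Set (Fin j → Ω)) : Prop :=
  ∀ i j : ℕ, i ≠ j → ∀ u ∈ L i, ∀ v ∈ L j, ¬ IsPref u v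

/-- `L^{≤ t+1}`: words of length `t+1` having a prefix in some `L j` (necessarily `j ≤ t+1`). -/
def Lle (L : (j : ℕ) → Set (Fin j → Ω)) (t : ℕ) : Set (Fin (t + 1) → Ω) :=
  {v | ∃ j : ℕ, ∃ u ∈ L j, IsPref u v}

/-- `L^{> t+1}`: words of length `t+1` that are prefixes of members of some `L j` with `j > t+1`. -/
def Lgt (L : (j : ℕ) → Set (Fin j → Ω)) (t : ℕ) : Set (Fin (t + 1) → Ω) :=
  {u | ∃ j : ℕ, t + 1 < j ∧ ∃ v ∈ L j, IsPref u v}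

/-- `T_{n+1}`: words of length `n+1` whose letters are outside `T` except the last one, in `T`. -/
def Tword (T : Set Ω) (n : ℕ) : Set (Fin (n + 1) → Ω) :=
  {u | (∀ i : Fin (n + 1), (i : ℕ) < n → u i ∉ T) ∧ u (Fin.last n) ∈ T}

/-- `T^{≤ t+1}`: words of length `t+1` with some letter in `T`. -/
def Tle (T : Set Ω) (t : ℕ) : Set (Fin (t + 1) → Ω) := {u | ∃ i, u i ∈ T}

/-- Infinite sequences that terminate (enter `T`) in finite time. -/
def Tf (T : Set Ω) : Set (ℕ → Ω) := {ω | ∃ j, ω j ∈ T}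

/-- T-respectfulness of a sequence of languages. -/
def TRespectful (T : Set Ω) (L : (j : ℕ) → Set (Fin j → Ω)) : Prop :=
  ∀ n : ℕ, Lgt L n ∩ Tword T n = ∅

/-- Truncated weight of a word of length `t+1`. -/
noncomputable def wt (sc : Ω → ℝ≥0∞) (t : ℕ) (u : Fin (t + 1) → Ω) : ℝ≥0∞ :=
  ∏ i, sc (u i)

/-- Weight of an infinite sequence: the limit (infimum) of the nonincreasing
sequence of partial products of the scores. -/
noncomputable def w (sc : Ω → ℝ≥0∞) (ω : ℕ → Ω) : ℝ≥0∞ :=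
  ⨅ t : ℕ, ∏ i : Fin (t + 1), sc (ω i)

/-- Finite approximation `f_t` of a function on infinite sequences. -/
noncomputable def ft (star : Ω) (t : ℕ) (f : (ℕ → Ω) → ℝ≥0∞) (u : Fin (t + 1) → Ω) : ℝ≥0∞ :=
  f (extendW star u)

/-- A prefix-closed function with branches `L`. -/
structure IsPrefixClosed (T : Set Ω) (f : (ℕ → Ω) → ℝ≥0∞)
    (L : (j : ℕ) → Set (Fin j → Ω)) : Prop where
  measF : Measurable f
  measL : ∀ j, MeasurableSet (L j)
  pf : PrefixFree L
  supp : Function.support f = ⋃ j, cyl (L j)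
  const : ∀ j : ℕ, ∀ u ∈ L j, ∀ ω ω' : ℕ → Ω, f (cat u ω) = f (cat u ω')
  resp : TRespectful T L

/-- Sequences that, from the first moment (if any) they enter `T`, remain in `T` forever. -/
def Theta (T : Set Ω) : Set (ℕ → Ω) :=
  {ω | ∀ n, ω n ∉ T} ∪ ⋃ j : ℕ, {ω | (∀ n, n < j → ω n ∉ T) ∧ ∀ n, j ≤ n → ω n ∈ T}

/-- Finite version of `Theta`, on words of length `n+1`. -/
def ThetaW (T : Set Ω) (n : ℕ) : Set (Fin (n + 1) → Ω) :=
  {u | ∀ i, u i ∉ T} ∪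
    ⋃ j : ℕ, {u | j ≤ n ∧ (∀ i : Fin (n + 1), (i : ℕ) < j → u i ∉ T) ∧
      ∀ i : Fin (n + 1), j ≤ (i : ℕ) → u i ∈ T}

/-- The lifting of `h : Ω → ℝ≥0∞` (supported on `T`) to infinite sequences. -/
noncomputable def lift (T : Set Ω) (h : Ω → ℝ≥0∞) (ω : ℕ → Ω) : ℝ≥0∞ :=
  ∑' n : ℕ, (cyl (Tword T n)).indicator 1 ω * h (ω n)

/-- The branches of the lifting of `h`: `L 0 = ∅` and `L j = (Ω∖T)^{j-1}·(T ∩ supp h)`. -/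
def liftBranch (T : Set Ω) (h : Ω → ℝ≥0∞) : (j : ℕ) → Set (Fin j → Ω)
  | 0 => ∅
  | n + 1 => {u | (∀ i : Fin (n + 1), (i : ℕ) < n → u i ∉ T) ∧
      u (Fin.last n) ∈ T ∩ Function.support h}

/-- The filtering distribution at time `t+1` induced by a measure on words of
length `t+1` and the weight `wt sc t` as global potential. -/
noncomputable def filt (sc : Ω → ℝ≥0∞) (t : ℕ) (μ : Measure (Fin (t + 1) → Ω)) : Measure Ω :=
  (∫⁻ u, wt sc t u ∂μ)⁻¹ • Measure.map (fun u => u (Fin.last t)) (μ.withDensity (wt sc t))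

/-- The data of a Markov chain: an initial law `μ1`, a Markov transition kernel `κ`,
the laws `μF n` of the first `n+1` states, and the law `μI` on infinite
trajectories, uniquely determined by the Ionescu-Tulcea theorem through the
cylinder condition `proj`. -/
structure MarkovSetting (Ω : Type*) [MeasurableSpace Ω] where
  μ1 : Measure Ω
  prob1 : IsProbabilityMeasure μ1
  κ : Kernel Ω Ω
  markov : IsMarkovKernel κ
  μF : (n : ℕ) → Measure (Fin (n + 1) → Ω)
  μI : Measure (ℕ → Ω)
  probI : IsProbabilityMeasure μI
  base : μF 0 = Measure.map (fun x => fun _ : Fin 1 => x) μ1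
  step : ∀ n : ℕ, μF (n + 1) =
    Measure.map (fun p : (Fin (n + 1) → Ω) × Ω => Fin.snoc p.1 p.2)
      ((μF n) ⊗ₘ (κ.comap (fun v => v (Fin.last n)) (measurable_pi_apply _)))
  proj : ∀ n : ℕ, Measure.map (take (n + 1)) μI = μF n

lemma measurable_take (t : ℕ) : Measurable (take t : (ℕ → Ω) → Fin t → Ω) :=
  measurable_pi_lambda _ fun i => measurable_pi_apply _

lemma measurable_extendW (star : Ω) (j : ℕ) :
    Measurable (extendW star : (Fin j → Ω) → ℕ → Ω) := by
  apply measurable_pi_lambda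
  intro n
  unfold extendW
  by_cases h : n < j
  · simpa [h] using measurable_pi_apply (⟨n, h⟩ : Fin j)
  · simpa [h] using (measurable_const : Measurable fun _ : Fin j → Ω => star)

lemma measurable_wt (sc : Ω → ℝ≥0∞) (hsc : Measurable sc) (t : ℕ) :
    Measurable (wt sc t) :=
  Finset.measurable_prod _ fun i _ => hsc.comp (measurable_pi_apply i)

lemma measurableSet_Tle {T : Set Ω} (hT : MeasurableSet T) (t : ℕ) :
    MeasurableSet (Tle T t) := by
  have h : Tle T t = ⋃ i : Fin (t+1), (fun u : Fin (t+1) → Ω => u i) ⁻¹' T := by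
    ext u; simp [Tle]
  rw [h]
  exact MeasurableSet.iUnion fun i => (measurable_pi_apply i) hT

lemma measurableSet_Lle {L : (j : ℕ) → Set (Fin j → Ω)} (hL : ∀ j, MeasurableSet (L j)) (t : ℕ) :
    MeasurableSet (Lle L t) := by
  have h : Lle L t = ⋃ j : ℕ, ⋃ h : j ≤ t + 1,
      (fun v : Fin (t+1) → Ω => fun i : Fin j => v (Fin.castLE h i)) ⁻¹' L j := by
    ext v
    constructor
    · rintro ⟨j, u, hu, h, hpref⟩
      refine mem_iUnion.2 ⟨j, mem_iUnion.2 ⟨h, ?_⟩⟩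
      have he : (fun i : Fin j => v (Fin.castLE h i)) = u := by
        funext k; exact (hpref k).symm
      simpa [he] using hu
    · intro hv
      rcases mem_iUnion.1 hv with ⟨j, hv⟩
      rcases mem_iUnion.1 hv with ⟨h, hv⟩
      exact ⟨j, _, hv, h, fun k => rfl⟩
  rw [h]
  exact MeasurableSet.iUnion fun j => MeasurableSet.iUnion fun h =>
    (measurable_pi_lambda _ fun i => measurable_pi_apply _) (hL j)

lemma wt_take (sc : Ω → ℝ≥0∞) (t : ℕ) (ω : ℕ → Ω) :
    wt sc t (take (t+1) ω) = ∏ i : Fin (t+1), sc (ω (i : ℕ)) := rfl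

lemma pp_antitone (sc : Ω → ℝ≥0∞) (hsc1 : ∀ x, sc x ≤ 1) (ω : ℕ → Ω) :
    Antitone (fun t : ℕ => ∏ i : Fin (t+1), sc (ω (i : ℕ))) := by
  apply antitone_nat_of_succ_le
  intro t
  calc ∏ i : Fin (t+2), sc (ω (i : ℕ))
      = (∏ i : Fin (t+1), sc (ω (i : ℕ))) * sc (ω (t+1)) := by
        rw [Fin.prod_univ_castSucc]; simp
    _ ≤ (∏ i : Fin (t+1), sc (ω (i : ℕ))) * 1 := by gcongr; exact hsc1 _
    _ = _ := mul_one _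

lemma pp_le_one (sc : Ω → ℝ≥0∞) (hsc1 : ∀ x, sc x ≤ 1) (ω : ℕ → Ω) (t : ℕ) :
    (∏ i : Fin (t+1), sc (ω (i : ℕ))) ≤ 1 :=
  Finset.prod_le_one (fun _ _ => zero_le) (fun i _ => hsc1 _)

lemma tendsto_pp (sc : Ω → ℝ≥0∞) (hsc1 : ∀ x, sc x ≤ 1) (ω : ℕ → Ω) :
    Tendsto (fun t : ℕ => ∏ i : Fin (t+1), sc (ω (i : ℕ))) atTop (nhds (w sc ω)) :=
  tendsto_atTop_iInf (pp_antitone sc hsc1 ω)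

lemma w_le_one (sc : Ω → ℝ≥0∞) (hsc1 : ∀ x, sc x ≤ 1) (ω : ℕ → Ω) : w sc ω ≤ 1 :=
  le_trans (iInf_le _ 0) (pp_le_one sc hsc1 ω 0)

lemma indicator_one_le_one {α : Type*} (s : Set α) (x : α) :
    s.indicator (1 : α → ℝ≥0∞) x ≤ 1 := by
  by_cases h : x ∈ s <;> simp [h]

lemma ft_take_eq (star : Ω) (f : (ℕ → Ω) → ℝ≥0∞) {L : (j : ℕ) → Set (Fin j → Ω)}
    (hconst : ∀ j : ℕ, ∀ u ∈ L j, ∀ ω ω' : ℕ → Ω, f (cat u ω) = f (cat u ω'))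
    {j t : ℕ} (ω : ℕ → Ω) (hj : take j ω ∈ L j) (hjt : j ≤ t + 1) :
    f (extendW star (take (t+1) ω)) = f ω := by
  set v : ℕ → Ω := fun n => if n + j < t + 1 then ω (n + j) else star with hv
  have h1 : extendW star (take (t+1) ω) = cat (take j ω) v := by
    funext n
    unfold extendW cat take
    rcases lt_or_ge n j with h | h
    · rw [dif_pos (show n < t+1 by omega), dif_pos h]
    · rw [dif_neg (not_lt.2 h)]
      rcases lt_or_ge n (t+1) with h2 | h2
      · rw [dif_pos h2]
        show ω n = v (n - j)
        rw [hv]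
        simp only []
        rw [if_pos (by omega)]
        congr 1; omega
      · rw [dif_neg (not_lt.2 h2)]
        show star = v (n - j)
        rw [hv]
        simp only []
        rw [if_neg (by omega)]
  have h2 : cat (take j ω) (fun n => ω (n + j)) = ω := by
    funext n; unfold cat take
    rcases lt_or_ge n j with h | h
    · rw [dif_pos h]
    · rw [dif_neg (not_lt.2 h)]
      show ω (n - j + j) = ω n
      congr 1; omega
  rw [h1, hconst j _ hj v (fun n => ω (n + j)), h2]


lemma ae_theta (M : MarkovSetting Ω) {T : Set Ω} (hT : MeasurableSet T)
    (hκT : ∀ ω ∈ T, M.κ ω = Measure.dirac ω) :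
    ∀ᵐ ω ∂M.μI, ω ∈ Theta T := by
  classical
  haveI := M.probI
  haveI := M.markov
  have hBad : ∀ n : ℕ, M.μI {ω : ℕ → Ω | ω n ∈ T ∧ ω (n+1) ∉ T} = 0 := by
    intro n
    haveI : IsProbabilityMeasure (M.μF n) := by
      rw [← M.proj n]; exact Measure.isProbabilityMeasure_map (measurable_take _).aemeasurable
    set S : Set (Fin (n+2) → Ω) :=
      {u | u (Fin.castSucc (Fin.last n)) ∈ T ∧ u (Fin.last (n+1)) ∉ T} with hSdef
    have hS : MeasurableSet S := by
      have he : S = ((fun u : Fin (n+2) → Ω => u (Fin.castSucc (Fin.last n))) ⁻¹' T) ∩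
          ((fun u : Fin (n+2) → Ω => u (Fin.last (n+1))) ⁻¹' Tᶜ) := rfl
      rw [he]
      exact ((measurable_pi_apply _) hT).inter ((measurable_pi_apply _) hT.compl)
    have h1 : {ω : ℕ → Ω | ω n ∈ T ∧ ω (n+1) ∉ T} = take (n+2) ⁻¹' S := rfl
    have hsnoc : Measurable (fun p : (Fin (n+1) → Ω) × Ω => (Fin.snoc p.1 p.2 : Fin (n+2) → Ω)) := by
      apply measurable_pi_lambda
      intro i
      refine Fin.lastCases ?_ ?_ i
      · simpa [Fin.snoc_last] using measurable_snd
      · intro k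
        have hk : Measurable fun c : (Fin (n+1) → Ω) × Ω => c.1 k :=
          (measurable_pi_apply k).comp measurable_fst
        simpa [Fin.snoc_castSucc] using hk
    set A : Set (Fin (n+1) → Ω) := {u | u (Fin.last n) ∈ T} with hAdef
    have hA : MeasurableSet A := (measurable_pi_apply _) hT
    have h2 : (fun p : (Fin (n+1) → Ω) × Ω => (Fin.snoc p.1 p.2 : Fin (n+2) → Ω)) ⁻¹' S
        = A ×ˢ Tᶜ := by
      ext p
      simp [hSdef, hAdef, Fin.snoc_castSucc, Fin.snoc_last, Set.mem_prod]
    rw [h1, ← Measure.map_apply (measurable_take _) hS, M.proj (n+1), M.step n,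
        Measure.map_apply hsnoc hS, h2, Measure.compProd_apply (hA.prod hT.compl)]
    have h3 : ∀ u : Fin (n+1) → Ω,
        (M.κ.comap (fun v => v (Fin.last n)) (measurable_pi_apply _)) u (Prod.mk u ⁻¹' (A ×ˢ Tᶜ)) = 0 := by
      intro u
      rw [Kernel.comap_apply]
      by_cases hu : u (Fin.last n) ∈ T
      · have he : Prod.mk u ⁻¹' (A ×ˢ Tᶜ) = Tᶜ := by
          ext x; simp [hAdef, hu]
        rw [he, hκT _ hu, Measure.dirac_apply' _ hT.compl]
        simp [hu]
      · have he : Prod.mk u ⁻¹' (A ×ˢ Tᶜ) = ∅ := by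
          ext x; simp [hAdef, hu]
        simp [he]
    simp only [h3, lintegral_zero]
  have hsub : (Theta T)ᶜ ⊆ ⋃ n, {ω : ℕ → Ω | ω n ∈ T ∧ ω (n+1) ∉ T} := by
    intro ω hω
    have h1 : ¬ (∀ n, ω n ∉ T) ∧
        ∀ j : ℕ, ¬ ((∀ n, n < j → ω n ∉ T) ∧ ∀ n, j ≤ n → ω n ∈ T) := by
      simpa [Theta, not_or] using hω
    have hex : ∃ n, ω n ∈ T := by
      by_contra hc; push_neg at hc; exact h1.1 hc
    have hj : ω (Nat.find hex) ∈ T := Nat.find_spec hex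
    have hjmin : ∀ n, n < Nat.find hex → ω n ∉ T := fun n hn => Nat.find_min hex hn
    have h2 := h1.2 (Nat.find hex)
    push_neg at h2
    obtain ⟨m, hm1, hm2⟩ := h2 hjmin
    have hexm : ∃ m, Nat.find hex ≤ m ∧ ω m ∉ T := ⟨m, hm1, hm2⟩
    obtain ⟨hm0a, hm0b⟩ := Nat.find_spec hexm
    have hm0pos : Nat.find hex < Nat.find hexm :=
      lt_of_le_of_ne hm0a (by intro h; exact hm0b (h ▸ hj))
    have hprev : ω (Nat.find hexm - 1) ∈ T := by
      by_contra hc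
      have : Nat.find hexm ≤ Nat.find hexm - 1 := Nat.find_min' hexm ⟨by omega, hc⟩
      omega
    refine Set.mem_iUnion.2 ⟨Nat.find hexm - 1, hprev, ?_⟩
    have he : Nat.find hexm - 1 + 1 = Nat.find hexm := by omega
    rw [he]; exact hm0b
  have h0 : M.μI ((Theta T)ᶜ) = 0 :=
    measure_mono_null hsub (measure_iUnion_null hBad)
  exact ae_iff.2 h0


/-- **Tightness of the finite approximation bounds.** -/
theorem tightness
    (M : MarkovSetting Ω) (T : Set Ω) (hT : MeasurableSet T)
    (hκT : ∀ ω ∈ T, M.κ ω = Measure.dirac ω)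
    (sc : Ω → ℝ≥0∞) (hsc : Measurable sc) (hsc1 : ∀ x, sc x ≤ 1)
    (hscT : ∀ ω ∈ T, sc ω = 1) (star : Ω)
    (Ht0 : ∃ t0 : ℕ, 0 < ∫⁻ u, (Tle T t0).indicator 1 u * wt sc t0 u ∂(M.μF t0))
    (hterm : M.μI (Tf T) = 1)
    (f : (ℕ → Ω) → ℝ≥0∞) (L : (j : ℕ) → Set (Fin j → Ω))
    (hf : IsPrefixClosed T f L)
    (Mb : ℝ≥0∞) (hMbTop : Mb ≠ ⊤) (hfM : ∀ ω, f ω ≤ Mb) :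
    Tendsto (fun t : ℕ =>
        (∫⁻ u, ft star t f u * ((Lle L t ∩ Tle T t).indicator 1 u) * wt sc t u ∂(M.μF t)) /
          (∫⁻ u, wt sc t u ∂(M.μF t))) atTop
      (nhds ((∫⁻ ω, f ω * w sc ω ∂M.μI) / (∫⁻ ω, w sc ω ∂M.μI))) ∧
    Tendsto (fun t : ℕ =>
        ((∫⁻ u, ft star t f u * ((Lle L t ∩ Tle T t).indicator 1 u) * wt sc t u ∂(M.μF t)) /
            (∫⁻ u, wt sc t u ∂(M.μF t))) *
            ((∫⁻ u, wt sc t u ∂(M.μF t)) /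
              (∫⁻ u, (Tle T t).indicator 1 u * wt sc t u ∂(M.μF t))) +
          Mb * ((∫⁻ u, wt sc t u ∂(M.μF t)) /
              (∫⁻ u, (Tle T t).indicator 1 u * wt sc t u ∂(M.μF t)) - 1)) atTop
      (nhds ((∫⁻ ω, f ω * w sc ω ∂M.μI) / (∫⁻ ω, w sc ω ∂M.μI))) := by
  classical
  haveI := M.probI
  obtain ⟨t0, ht0⟩ := Ht0
  have htake : ∀ (t : ℕ) (g : (Fin (t+1) → Ω) → ℝ≥0∞), Measurable g →
      ∫⁻ u, g u ∂(M.μF t) = ∫⁻ ω, g (take (t+1) ω) ∂M.μI := fun t g hg => by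
    rw [← M.proj t, lintegral_map hg (measurable_take _)]
  have hmeasD : ∀ t, Measurable (wt sc t) := measurable_wt sc hsc
  have hmeasE : ∀ t, Measurable
      (fun u : Fin (t+1) → Ω => (Tle T t).indicator (1 : (Fin (t+1) → Ω) → ℝ≥0∞) u * wt sc t u) :=
    fun t => (Measurable.indicator measurable_const (measurableSet_Tle hT t)).mul (hmeasD t)
  have hft : ∀ t, Measurable (ft star t f) :=
    fun t => hf.measF.comp (measurable_extendW star (t+1))
  have hmeasN : ∀ t, Measurable (fun u : Fin (t+1) → Ω => ft star t f u *
      ((Lle L t ∩ Tle T t).indicator (1 : (Fin (t+1) → Ω) → ℝ≥0∞) u) * wt sc t u) :=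
    fun t => ((hft t).mul (Measurable.indicator measurable_const
        ((measurableSet_Lle hf.measL t).inter (measurableSet_Tle hT t)))).mul (hmeasD t)
  have hTf : ∀ᵐ ω ∂M.μI, ω ∈ Tf T := by
    have hm : MeasurableSet (Tf T) := by
      have he : Tf T = ⋃ j : ℕ, (fun ω : ℕ → Ω => ω j) ⁻¹' T := by ext ω; simp [Tf]
      rw [he]; exact MeasurableSet.iUnion fun j => (measurable_pi_apply j) hT
    rw [ae_iff]
    have he2 : {ω : ℕ → Ω | ¬ ω ∈ Tf T} = (Tf T)ᶜ := rfl
    rw [he2, measure_compl hm (measure_ne_top _ _), hterm, measure_univ, tsub_self]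
  -- the three limits
  have hDt : Tendsto (fun t : ℕ => ∫⁻ u, wt sc t u ∂(M.μF t)) atTop
      (nhds (∫⁻ ω, w sc ω ∂M.μI)) := by
    have he : ∀ t : ℕ, (∫⁻ u, wt sc t u ∂(M.μF t))
        = ∫⁻ ω, (∏ i : Fin (t+1), sc (ω (i:ℕ))) ∂M.μI := by
      intro t; rw [htake t _ (hmeasD t)]; rfl
    simp only [he]
    refine tendsto_lintegral_of_dominated_convergence (fun _ => 1) ?_ ?_ (by simp) ?_
    · intro t; exact (hmeasD t).comp (measurable_take _)
    · intro t; exact Eventually.of_forall fun ω => pp_le_one sc hsc1 ω t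
    · exact Eventually.of_forall fun ω => tendsto_pp sc hsc1 ω
  have hEt : Tendsto (fun t : ℕ => ∫⁻ u, (Tle T t).indicator 1 u * wt sc t u ∂(M.μF t))
      atTop (nhds (∫⁻ ω, w sc ω ∂M.μI)) := by
    have he : ∀ t : ℕ, (∫⁻ u, (Tle T t).indicator 1 u * wt sc t u ∂(M.μF t))
        = ∫⁻ ω, (Tle T t).indicator 1 (take (t+1) ω) * ∏ i : Fin (t+1), sc (ω (i:ℕ)) ∂M.μI := by
      intro t; rw [htake t _ (hmeasE t)]; rfl
    simp only [he]
    refine tendsto_lintegral_of_dominated_convergence (fun _ => 1) ?_ ?_ (by simp) ?_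
    · intro t; exact (hmeasE t).comp (measurable_take _)
    · intro t
      refine Eventually.of_forall fun ω => ?_
      calc (Tle T t).indicator 1 (take (t+1) ω) * ∏ i : Fin (t+1), sc (ω (i:ℕ))
          ≤ 1 * 1 := mul_le_mul' (indicator_one_le_one _ _) (pp_le_one sc hsc1 ω t)
        _ = 1 := one_mul _
    · filter_upwards [hTf] with ω hω
      obtain ⟨j, hj⟩ := hω
      refine Tendsto.congr' ?_ (tendsto_pp sc hsc1 ω)
      filter_upwards [eventually_ge_atTop j] with t ht
      have hmem : take (t+1) ω ∈ Tle T t := ⟨⟨j, by omega⟩, hj⟩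
      rw [Set.indicator_of_mem hmem]; simp
  have hNt : Tendsto (fun t : ℕ =>
      ∫⁻ u, ft star t f u * ((Lle L t ∩ Tle T t).indicator 1 u) * wt sc t u ∂(M.μF t))
      atTop (nhds (∫⁻ ω, f ω * w sc ω ∂M.μI)) := by
    have he : ∀ t : ℕ,
        (∫⁻ u, ft star t f u * ((Lle L t ∩ Tle T t).indicator 1 u) * wt sc t u ∂(M.μF t))
        = ∫⁻ ω, f (extendW star (take (t+1) ω)) *
            ((Lle L t ∩ Tle T t).indicator 1 (take (t+1) ω)) *
            ∏ i : Fin (t+1), sc (ω (i:ℕ)) ∂M.μI := by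
      intro t; rw [htake t _ (hmeasN t)]; rfl
    simp only [he]
    refine tendsto_lintegral_of_dominated_convergence (fun _ => Mb) ?_ ?_ ?_ ?_
    · intro t; exact (hmeasN t).comp (measurable_take _)
    · intro t
      refine Eventually.of_forall fun ω => ?_
      calc f (extendW star (take (t+1) ω)) *
            ((Lle L t ∩ Tle T t).indicator 1 (take (t+1) ω)) *
            ∏ i : Fin (t+1), sc (ω (i:ℕ))
          ≤ Mb * 1 * 1 :=
            mul_le_mul' (mul_le_mul' (hfM _) (indicator_one_le_one _ _)) (pp_le_one sc hsc1 ω t)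
        _ = Mb := by simp
    · simpa using hMbTop
    · filter_upwards [hTf] with ω hω
      by_cases hz : f ω = 0
      · have hzero : ∀ t : ℕ,
            (Lle L t ∩ Tle T t).indicator (1 : (Fin (t+1) → Ω) → ℝ≥0∞) (take (t+1) ω) = 0 := by
          intro t
          refine Set.indicator_of_notMem ?_ _
          rintro ⟨⟨j, u, hu, hle, hpref⟩, -⟩
          have htu : take j ω = u := by
            funext k; exact (hpref k).symm
          have hcyl : ω ∈ cyl (L j) := by
            show take j ω ∈ L j
            rw [htu]; exact hu
          have hmem : ω ∈ Function.support f := by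
            rw [hf.supp]; exact Set.mem_iUnion.2 ⟨j, hcyl⟩
          exact hmem hz
        have h0 : Tendsto (fun _ : ℕ => (0:ℝ≥0∞)) atTop (nhds (f ω * w sc ω)) := by
          rw [hz, zero_mul]; exact tendsto_const_nhds
        exact h0.congr fun t => by simp [hzero t]
      · have hmem : ω ∈ Function.support f := hz
        rw [hf.supp] at hmem
        obtain ⟨j, hcyl⟩ := Set.mem_iUnion.1 hmem
        obtain ⟨i0, hi0⟩ := hω
        have hfne : f ω ≠ ⊤ := ((hfM ω).trans_lt hMbTop.lt_top).ne
        refine Tendsto.congr' ?_ (ENNReal.Tendsto.const_mul (tendsto_pp sc hsc1 ω) (Or.inr hfne))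
        filter_upwards [eventually_ge_atTop j, eventually_ge_atTop i0] with t htj hti
        have h1 : f (extendW star (take (t+1) ω)) = f ω :=
          ft_take_eq star f hf.const ω hcyl (by omega)
        have h2 : take (t+1) ω ∈ Lle L t ∩ Tle T t :=
          ⟨⟨j, take j ω, hcyl, ⟨by omega, fun k => rfl⟩⟩, ⟨(⟨i0, by omega⟩ : Fin (t+1)), hi0⟩⟩
        rw [h1, Set.indicator_of_mem h2]
        simp
  -- positivity of the limit denominator
  have hThetaAe := ae_theta M hT hκT
  have hE0le : (∫⁻ u, (Tle T t0).indicator 1 u * wt sc t0 u ∂(M.μF t0))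
      ≤ ∫⁻ ω, w sc ω ∂M.μI := by
    rw [htake t0 _ (hmeasE t0)]
    refine lintegral_mono_ae ?_
    filter_upwards [hThetaAe] with ω hθ
    by_cases hmem : take (t0+1) ω ∈ Tle T t0
    · rw [Set.indicator_of_mem hmem, Pi.one_apply, one_mul, wt_take]
      obtain ⟨i, hi⟩ := hmem
      rcases hθ with hθ | hθ
      · exact absurd hi (hθ i)
      · obtain ⟨j, hpre, hpost⟩ := Set.mem_iUnion.1 hθ
        have hji : j ≤ (i : ℕ) := by
          by_contra hc
          push_neg at hc
          exact hpre (i : ℕ) hc hi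
        have hi2 : (i : ℕ) < t0 + 1 := i.isLt
        have hconstpp : ∀ t, t0 ≤ t →
            (∏ k : Fin (t+1), sc (ω (k:ℕ))) = ∏ k : Fin (t0+1), sc (ω (k:ℕ)) := by
          intro t ht
          induction t, ht using Nat.le_induction with
          | base => rfl
          | succ t ht ih =>
            have hT1 : ω (t+1) ∈ T := hpost (t+1) (by omega)
            calc ∏ k : Fin (t+2), sc (ω (k:ℕ))
                = (∏ k : Fin (t+1), sc (ω (k:ℕ))) * sc (ω (t+1)) := by
                  rw [Fin.prod_univ_castSucc]; simp
              _ = ∏ k : Fin (t+1), sc (ω (k:ℕ)) := by rw [hscT _ hT1, mul_one]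
              _ = _ := ih
        show (∏ k : Fin (t0+1), sc (ω (k:ℕ))) ≤ ⨅ t : ℕ, ∏ k : Fin (t+1), sc (ω (k:ℕ))
        refine le_iInf fun t => ?_
        rcases le_total t0 t with h | h
        · rw [hconstpp t h]
        · exact pp_antitone sc hsc1 ω h
    · rw [Set.indicator_of_notMem hmem]; simp
  have hDpos : 0 < ∫⁻ ω, w sc ω ∂M.μI := lt_of_lt_of_le ht0 hE0le
  have hDle1 : (∫⁻ ω, w sc ω ∂M.μI) ≤ 1 := by
    calc (∫⁻ ω, w sc ω ∂M.μI) ≤ ∫⁻ _ : ℕ → Ω, 1 ∂M.μI := lintegral_mono fun ω => w_le_one sc hsc1 ω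
      _ = 1 := by simp
  have hDnetop : (∫⁻ ω, w sc ω ∂M.μI) ≠ ⊤ := (hDle1.trans_lt ENNReal.one_lt_top).ne
  have hRatio := ENNReal.Tendsto.div hNt (Or.inr hDpos.ne') hDt (Or.inl hDnetop)
  have hAlpha : Tendsto (fun t : ℕ => (∫⁻ u, wt sc t u ∂(M.μF t)) /
      (∫⁻ u, (Tle T t).indicator 1 u * wt sc t u ∂(M.μF t))) atTop (nhds 1) := by
    have h := ENNReal.Tendsto.div hDt (Or.inl hDpos.ne') hEt (Or.inl hDnetop)
    rwa [ENNReal.div_self hDpos.ne' hDnetop] at h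
  refine ⟨hRatio, ?_⟩
  have h1 := ENNReal.Tendsto.mul hRatio (Or.inr ENNReal.one_ne_top) hAlpha (Or.inl one_ne_zero)
  have h2 := ENNReal.Tendsto.sub hAlpha (tendsto_const_nhds (x := (1:ℝ≥0∞)))
    (Or.inl ENNReal.one_ne_top)
  have h3 := ENNReal.Tendsto.const_mul (a := Mb) h2 (Or.inr hMbTop)
  have h4 := h1.add h3
  simpa using h4

end PaperPPG
end

section
/- (a) μ^∞(Θ) = 1; consequently, for every measurable A ⊆ Ω^∞ and every measurable f : Ω^∞ → [0,∞], ∫_A f dμ^∞ = ∫_{A∩Θ} f dμ^∞. (b) For every t ≥ 1, μᵗ(Θ_t) = 1; consequently, for every measurable A ⊆ Ωᵗ and every measurable f : Ωᵗ → [0,∞], ∫_A f dμᵗ = ∫_{A∩Θ_t} f dμᵗ. -/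
open MeasureTheory ProbabilityTheory Filter Set
open scoped ENNReal

namespace PaperPPG

variable {Ω : Type*} [MeasurableSpace Ω]

section Aux

lemma snoc_lt {n : ℕ} (u : Fin (n+1) → Ω) (x : Ω) (i : Fin (n+2)) (h : (i:ℕ) < n+1) :
    (Fin.snoc u x : Fin (n+2) → Ω) i = u ⟨(i:ℕ), h⟩ := by
  simp only [Fin.snoc, h, dif_pos, cast_eq]
  rfl

lemma snoc_last' {n : ℕ} (u : Fin (n+1) → Ω) (x : Ω) (i : Fin (n+2)) (h : (i:ℕ) = n+1) :
    (Fin.snoc u x : Fin (n+2) → Ω) i = x := by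
  simp [Fin.snoc, h]

lemma measurable_snocfun {n : ℕ} :
    Measurable (fun p : (Fin (n+1) → Ω) × Ω => (Fin.snoc p.1 p.2 : Fin (n+2) → Ω)) := by
  rw [measurable_pi_iff]
  intro i
  rcases lt_or_ge (i : ℕ) (n+1) with h | h
  · have : (fun p : (Fin (n+1) → Ω) × Ω => (Fin.snoc p.1 p.2 : Fin (n+2) → Ω) i) =
        fun p => p.1 ⟨(i:ℕ), h⟩ := funext fun p => snoc_lt p.1 p.2 i h
    rw [this]
    exact (measurable_pi_apply _).comp measurable_fst
  · have h' : (i:ℕ) = n+1 := le_antisymm (Nat.lt_succ_iff.mp i.isLt) h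
    have : (fun p : (Fin (n+1) → Ω) × Ω => (Fin.snoc p.1 p.2 : Fin (n+2) → Ω) i) =
        fun p => p.2 := funext fun p => snoc_last' p.1 p.2 i h'
    rw [this]
    exact measurable_snd

lemma measurableSet_thetaW {T : Set Ω} (hT : MeasurableSet T) (n : ℕ) :
    MeasurableSet (ThetaW T n) := by
  apply MeasurableSet.union
  · have : {u : Fin (n+1) → Ω | ∀ i, u i ∉ T} = ⋂ i, (fun u => u i) ⁻¹' Tᶜ := by
      ext u; simp [Set.mem_iInter]
    rw [this]
    exact MeasurableSet.iInter fun i => (measurable_pi_apply i) hT.compl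
  · refine MeasurableSet.iUnion fun j => ?_
    by_cases hj : j ≤ n
    · have he : {u : Fin (n+1) → Ω | j ≤ n ∧ (∀ i : Fin (n + 1), (i : ℕ) < j → u i ∉ T) ∧
          ∀ i : Fin (n + 1), j ≤ (i : ℕ) → u i ∈ T} =
          (⋂ i : Fin (n+1), ⋂ _ : (i:ℕ) < j, (fun u => u i) ⁻¹' Tᶜ) ∩
          (⋂ i : Fin (n+1), ⋂ _ : j ≤ (i:ℕ), (fun u => u i) ⁻¹' T) := by
        ext u; simp [Set.mem_iInter, hj]
      rw [he]
      exact (MeasurableSet.iInter fun i => MeasurableSet.iInter fun _ =>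
          (measurable_pi_apply i) hT.compl).inter
        (MeasurableSet.iInter fun i => MeasurableSet.iInter fun _ =>
          (measurable_pi_apply i) hT)
    · have he : {u : Fin (n+1) → Ω | j ≤ n ∧ (∀ i : Fin (n + 1), (i : ℕ) < j → u i ∉ T) ∧
          ∀ i : Fin (n + 1), j ≤ (i : ℕ) → u i ∈ T} = ∅ := by
        ext u; simp [hj]
      rw [he]; exact MeasurableSet.empty

lemma measurableSet_theta {T : Set Ω} (hT : MeasurableSet T) :
    MeasurableSet (Theta T) := by
  apply MeasurableSet.union
  · have : {ω : ℕ → Ω | ∀ n, ω n ∉ T} = ⋂ n, (fun ω => ω n) ⁻¹' Tᶜ := by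
      ext ω; simp [Set.mem_iInter]
    rw [this]
    exact MeasurableSet.iInter fun n => (measurable_pi_apply n) hT.compl
  · refine MeasurableSet.iUnion fun j => ?_
    have he : {ω : ℕ → Ω | (∀ n, n < j → ω n ∉ T) ∧ ∀ n, j ≤ n → ω n ∈ T} =
        (⋂ n : ℕ, ⋂ _ : n < j, (fun ω => ω n) ⁻¹' Tᶜ) ∩
        (⋂ n : ℕ, ⋂ _ : j ≤ n, (fun ω => ω n) ⁻¹' T) := by
      ext ω; simp [Set.mem_iInter]
    rw [he]
    exact (MeasurableSet.iInter fun i => MeasurableSet.iInter fun _ =>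
        (measurable_pi_apply i) hT.compl).inter
      (MeasurableSet.iInter fun i => MeasurableSet.iInter fun _ =>
        (measurable_pi_apply i) hT)

lemma thetaW_zero (T : Set Ω) : ThetaW T 0 = univ := by
  ext u
  simp only [Set.mem_univ, iff_true]
  by_cases h : u 0 ∈ T
  · right
    refine Set.mem_iUnion.2 ⟨0, Nat.le_refl 0, fun i hi => absurd hi (Nat.not_lt_zero _),
      fun i _ => ?_⟩
    have : i = 0 := Fin.ext (Nat.lt_one_iff.1 i.isLt)
    rwa [this]
  · left
    intro i
    have : i = 0 := Fin.ext (Nat.lt_one_iff.1 i.isLt)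
    rwa [this]

lemma theta_eq_iInter (T : Set Ω) :
    Theta T = ⋂ n : ℕ, take (n+1) ⁻¹' ThetaW T n := by
  classical
  ext ω
  constructor
  · intro h
    refine Set.mem_iInter.2 fun n => ?_
    rcases h with h | h
    · exact Or.inl fun i => h i
    · obtain ⟨j, hj1, hj2⟩ := Set.mem_iUnion.1 h
      by_cases hjn : j ≤ n
      · exact Or.inr (Set.mem_iUnion.2 ⟨j, hjn, fun i hi => hj1 i hi, fun i hi => hj2 i hi⟩)
      · exact Or.inl fun i => hj1 i
          (lt_of_le_of_lt (Nat.lt_succ_iff.1 i.isLt) (not_le.1 hjn))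
  · intro h
    have h' : ∀ n, take (n+1) ω ∈ ThetaW T n := fun n => Set.mem_iInter.1 h n
    by_cases hT : ∀ n, ω n ∉ T
    · exact Or.inl hT
    · push_neg at hT
      have hEx : ∃ m, ω m ∈ T := hT
      set j := Nat.find hEx with hjdef
      have hj : ω j ∈ T := Nat.find_spec hEx
      have hmin : ∀ k, k < j → ω k ∉ T := fun k hk => Nat.find_min hEx hk
      refine Or.inr (Set.mem_iUnion.2 ⟨j, hmin, fun n hn => ?_⟩)
      rcases h' n with hc | hc
      · exact absurd hj (hc ⟨j, Nat.lt_succ_of_le hn⟩)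
      · obtain ⟨j', hj'n, h1, h2⟩ := Set.mem_iUnion.1 hc
        have hj'j : j' ≤ j := by
          by_contra hjj
          exact (h1 ⟨j, Nat.lt_succ_of_le hn⟩ (not_le.1 hjj)) hj
        exact h2 ⟨n, n.lt_succ_self⟩ (le_trans hj'j hn)

lemma muF_prob (M : MarkovSetting Ω) (n : ℕ) : IsProbabilityMeasure (M.μF n) := by
  induction n with
  | zero =>
    rw [M.base]
    haveI := M.prob1
    exact Measure.isProbabilityMeasure_map
      (measurable_pi_lambda _ fun _ => measurable_id).aemeasurable
  | succ n ih =>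
    rw [M.step n]
    haveI := ih
    haveI := M.markov
    haveI : IsMarkovKernel (M.κ.comap (fun v : Fin (n+1) → Ω => v (Fin.last n))
        (measurable_pi_apply _)) := Kernel.IsMarkovKernel.comap _ _
    exact Measure.isProbabilityMeasure_map measurable_snocfun.aemeasurable

lemma muF_thetaW (M : MarkovSetting Ω) (T : Set Ω) (hT : MeasurableSet T)
    (hκT : ∀ ω ∈ T, M.κ ω = Measure.dirac ω) (n : ℕ) :
    M.μF n (ThetaW T n) = 1 := by
  induction n with
  | zero =>
    haveI := muF_prob M 0
    rw [thetaW_zero]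
    exact measure_univ
  | succ n ih =>
    haveI := M.markov
    haveI := muF_prob M n
    set κ' := M.κ.comap (fun v : Fin (n+1) → Ω => v (Fin.last n)) (measurable_pi_apply _)
      with hκ'
    haveI : IsMarkovKernel κ' := Kernel.IsMarkovKernel.comap _ _
    have hmS : MeasurableSet ((fun p : (Fin (n+1) → Ω) × Ω => (Fin.snoc p.1 p.2 : Fin (n+2) → Ω))
        ⁻¹' ThetaW T (n+1)) := measurable_snocfun (measurableSet_thetaW hT (n+1))
    rw [M.step n, Measure.map_apply measurable_snocfun (measurableSet_thetaW hT (n+1)),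
      Measure.compProd_apply hmS]
    have key : ∀ u ∈ ThetaW T n,
        κ' u (Prod.mk u ⁻¹' ((fun p : (Fin (n+1) → Ω) × Ω =>
          (Fin.snoc p.1 p.2 : Fin (n+2) → Ω)) ⁻¹' ThetaW T (n+1))) = 1 := by
      intro u hu
      have hκ'app : κ' u = M.κ (u (Fin.last n)) := Kernel.comap_apply _ _ _
      rcases hu with hu | hu
      · have huniv : Prod.mk u ⁻¹' ((fun p : (Fin (n+1) → Ω) × Ω =>
            (Fin.snoc p.1 p.2 : Fin (n+2) → Ω)) ⁻¹' ThetaW T (n+1)) = univ := by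
          ext x
          simp only [Set.mem_univ, iff_true, Set.mem_preimage]
          by_cases hx : x ∈ T
          · refine Or.inr (Set.mem_iUnion.2 ⟨n+1, Nat.le_refl _, fun i hi => ?_, fun i hi => ?_⟩)
            · rw [snoc_lt u x i hi]; exact hu _
            · have hie : (i:ℕ) = n+1 := le_antisymm (Nat.lt_succ_iff.1 i.isLt) hi
              rw [snoc_last' u x i hie]; exact hx
          · refine Or.inl fun i => ?_
            rcases lt_or_ge (i:ℕ) (n+1) with hlt | hge
            · rw [snoc_lt u x i hlt]; exact hu _
            · have hie : (i:ℕ) = n+1 := le_antisymm (Nat.lt_succ_iff.1 i.isLt) hge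
              rw [snoc_last' u x i hie]; exact hx
        rw [huniv]
        exact measure_univ
      · obtain ⟨j, hjn, h1, h2⟩ := Set.mem_iUnion.1 hu
        have hlast : u (Fin.last n) ∈ T := h2 (Fin.last n) (by simpa using hjn)
        rw [hκ'app, hκT _ hlast]
        apply Measure.dirac_apply_of_mem
        show (Fin.snoc u (u (Fin.last n)) : Fin (n+2) → Ω) ∈ ThetaW T (n+1)
        refine Or.inr (Set.mem_iUnion.2 ⟨j, le_trans hjn (Nat.le_succ n),
          fun i hi => ?_, fun i hi => ?_⟩)
        · have hlt : (i:ℕ) < n+1 := lt_of_lt_of_le hi (hjn.trans (Nat.le_succ n))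
          rw [snoc_lt u _ i hlt]; exact h1 ⟨(i:ℕ), hlt⟩ hi
        · rcases lt_or_ge (i:ℕ) (n+1) with hlt | hge
          · rw [snoc_lt u _ i hlt]; exact h2 ⟨(i:ℕ), hlt⟩ hi
          · have hie : (i:ℕ) = n+1 := le_antisymm (Nat.lt_succ_iff.1 i.isLt) hge
            rw [snoc_last' u _ i hie]; exact hlast
    apply le_antisymm
    · calc ∫⁻ u, κ' u (Prod.mk u ⁻¹' ((fun p : (Fin (n+1) → Ω) × Ω =>
            (Fin.snoc p.1 p.2 : Fin (n+2) → Ω)) ⁻¹' ThetaW T (n+1))) ∂M.μF n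
          ≤ ∫⁻ _, 1 ∂M.μF n := lintegral_mono fun u => prob_le_one
        _ = 1 := by simp
    · calc (1:ℝ≥0∞) = M.μF n (ThetaW T n) := ih.symm
        _ = ∫⁻ _ in ThetaW T n, 1 ∂M.μF n := by simp
        _ = ∫⁻ u in ThetaW T n, κ' u (Prod.mk u ⁻¹' ((fun p : (Fin (n+1) → Ω) × Ω =>
              (Fin.snoc p.1 p.2 : Fin (n+2) → Ω)) ⁻¹' ThetaW T (n+1))) ∂M.μF n :=
            setLIntegral_congr_fun (measurableSet_thetaW hT n)
              (fun u hu => (key u hu).symm)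
        _ ≤ _ := setLIntegral_le_lintegral _ _

lemma setLIntegral_inter_of_null {α : Type*} [MeasurableSpace α] {μ : Measure α}
    {S : Set α} (hS0 : μ Sᶜ = 0) (A : Set α) (f : α → ℝ≥0∞) :
    ∫⁻ x in A, f x ∂μ = ∫⁻ x in A ∩ S, f x ∂μ := by
  apply setLIntegral_congr
  refine (ae_eq_set.2 ⟨?_, ?_⟩)
  · exact measure_mono_null (fun x hx hxS => hx.2 ⟨hx.1, hxS⟩) hS0
  · exact measure_mono_null (fun x hx => (hx.2 hx.1.1).elim) measure_empty

end Aux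

/-- **Consistency of paths**: almost every (finite or infinite) path stays in `T`
forever once it has entered `T`. -/
theorem theta_ae
    (M : MarkovSetting Ω) (T : Set Ω) (hT : MeasurableSet T)
    (hκT : ∀ ω ∈ T, M.κ ω = Measure.dirac ω) :
    (M.μI (Theta T) = 1 ∧
      ∀ A : Set (ℕ → Ω), MeasurableSet A →
        ∀ f : (ℕ → Ω) → ℝ≥0∞, Measurable f →
          ∫⁻ ω in A, f ω ∂M.μI = ∫⁻ ω in A ∩ Theta T, f ω ∂M.μI) ∧
    ∀ n : ℕ, M.μF n (ThetaW T n) = 1 ∧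
      ∀ A : Set (Fin (n + 1) → Ω), MeasurableSet A →
        ∀ f : (Fin (n + 1) → Ω) → ℝ≥0∞, Measurable f →
          ∫⁻ u in A, f u ∂(M.μF n) = ∫⁻ u in A ∩ ThetaW T n, f u ∂(M.μF n) := by
  haveI := M.probI
  have hFn : ∀ n, M.μF n (ThetaW T n) = 1 := muF_thetaW M T hT hκT
  have hmeasW : ∀ n, MeasurableSet (ThetaW T n) := measurableSet_thetaW hT
  have htake : ∀ n : ℕ, Measurable (take (n+1) : (ℕ → Ω) → Fin (n+1) → Ω) := fun n =>
    measurable_pi_lambda _ fun i => measurable_pi_apply _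
  have hpre : ∀ n, M.μI (take (n+1) ⁻¹' ThetaW T n) = 1 := by
    intro n
    rw [← Measure.map_apply (htake n) (hmeasW n), M.proj n]
    exact hFn n
  have hTheta : M.μI (Theta T) = 1 := by
    rw [theta_eq_iInter,
      ← prob_compl_eq_zero_iff (MeasurableSet.iInter fun n => htake n (hmeasW n)),
      Set.compl_iInter]
    exact measure_iUnion_null fun n =>
      (prob_compl_eq_zero_iff (htake n (hmeasW n))).2 (hpre n)
  refine ⟨⟨hTheta, fun A hA f hf => ?_⟩, fun n => ⟨hFn n, fun A hA f hf => ?_⟩⟩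
  · exact setLIntegral_inter_of_null
      ((prob_compl_eq_zero_iff (measurableSet_theta hT)).2 hTheta) A f
  · haveI := muF_prob M n
    exact setLIntegral_inter_of_null
      ((prob_compl_eq_zero_iff (hmeasW n)).2 (hFn n)) A f


end PaperPPG
end

section
/- Let h : Ω → [0,∞] be measurable with supp(h) ⊆ T, let f := lift(h), and let (L_j)_{j≥0} be the branches of f, namely L₀ := ∅ and L_j := (Ω∖T)^{j−1}·(T ∩ supp(h)) for j ≥ 1. Then for every t ≥ 1: ∫_{Ωᵗ} f_t·1_{L^{≤t}}·w_t dμᵗ = ∫_{Ωᵗ} h(ω_t)·w_t(ω₁,…,ω_t) dμᵗ(ω₁,…,ω_t), i.e. [S]ᵗ(f_t·1_{L^{≤t}}·w_t) = [S]ᵗ((h∘pr_t)·w_t), where pr_t(ω₁,…,ω_t) := ω_t. -/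
open MeasureTheory ProbabilityTheory Filter Set
open scoped ENNReal

namespace PaperPPG

variable {Ω : Type*} [MeasurableSpace Ω]

private lemma measurable_snocFun (n : ℕ) :
    Measurable (fun p : ((Fin (n + 1) → Ω) × Ω) => (Fin.snoc p.1 p.2 : Fin (n + 2) → Ω)) := by
  apply measurable_pi_lambda
  intro i
  induction i using Fin.lastCases with
  | last => simpa [Fin.snoc_last] using measurable_snd
  | cast i => simp only [Fin.snoc_castSucc]; exact (measurable_pi_apply i).comp measurable_fst

private lemma probF (M : MarkovSetting Ω) : ∀ n, IsProbabilityMeasure (M.μF n) := by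
  intro n
  induction n with
  | zero =>
    rw [M.base]
    haveI := M.prob1
    exact Measure.isProbabilityMeasure_map
      (measurable_pi_lambda _ (fun _ => measurable_id)).aemeasurable
  | succ n ih =>
    rw [M.step n]
    haveI := ih
    haveI := M.markov
    exact Measure.isProbabilityMeasure_map (measurable_snocFun n).aemeasurable

private lemma measS (T : Set Ω) (hT : MeasurableSet T) (h : Ω → ℝ≥0∞) (hh : Measurable h)
    (t : ℕ) :
    MeasurableSet {u : Fin (t + 1) → Ω |
      ∀ i j : Fin (t + 1), i ≤ j → u i ∈ T → u j ∈ T ∧ h (u j) = h (u i)} := by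
  have heq : {u : Fin (t + 1) → Ω |
      ∀ i j : Fin (t + 1), i ≤ j → u i ∈ T → u j ∈ T ∧ h (u j) = h (u i)} =
      ⋂ i, ⋂ j, {u : Fin (t + 1) → Ω | i ≤ j → u i ∈ T → u j ∈ T ∧ h (u j) = h (u i)} := by
    ext u; simp [Set.mem_iInter]
  rw [heq]
  refine MeasurableSet.iInter fun i => MeasurableSet.iInter fun j => ?_
  by_cases hij : i ≤ j
  · have heq2 : {u : Fin (t + 1) → Ω | i ≤ j → u i ∈ T → u j ∈ T ∧ h (u j) = h (u i)} =
        ((fun u : Fin (t + 1) → Ω => u i) ⁻¹' T)ᶜ ∪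
          (((fun u : Fin (t + 1) → Ω => u j) ⁻¹' T) ∩ {u | h (u j) = h (u i)}) := by
      ext u
      simp only [Set.mem_setOf_eq, Set.mem_union, Set.mem_compl_iff, Set.mem_preimage,
        Set.mem_inter_iff]
      constructor
      · intro hu
        by_cases hi : u i ∈ T
        · exact Or.inr (hu hij hi)
        · exact Or.inl hi
      · rintro (hu | hu) _ hi
        · exact absurd hi hu
        · exact hu
    rw [heq2]
    exact (((measurable_pi_apply i) hT).compl).union
      (((measurable_pi_apply j) hT).inter
        (StronglyMeasurable.measurableSet_eq_fun
          ((hh.comp (measurable_pi_apply j)).stronglyMeasurable)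
          ((hh.comp (measurable_pi_apply i)).stronglyMeasurable)))
  · have heq2 : {u : Fin (t + 1) → Ω | i ≤ j → u i ∈ T → u j ∈ T ∧ h (u j) = h (u i)} =
        Set.univ := by
      ext u; simp only [Set.mem_setOf_eq, Set.mem_univ, iff_true]
      intro hle; exact absurd hle hij
    rw [heq2]; exact MeasurableSet.univ

private lemma snoc_prop {T : Set Ω} {h : Ω → ℝ≥0∞} {n : ℕ} {p : Fin (n + 1) → Ω} {x : Ω}
    (hp : ∀ i j : Fin (n + 1), i ≤ j → p i ∈ T → p j ∈ T ∧ h (p j) = h (p i))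
    (hx : p (Fin.last n) ∈ T → x ∈ T ∧ h x = h (p (Fin.last n))) :
    ∀ i j : Fin (n + 2), i ≤ j → (Fin.snoc p x : Fin (n + 2) → Ω) i ∈ T →
      (Fin.snoc p x : Fin (n + 2) → Ω) j ∈ T ∧
        h ((Fin.snoc p x : Fin (n + 2) → Ω) j) = h ((Fin.snoc p x : Fin (n + 2) → Ω) i) := by
  intro i j hij hi
  induction j using Fin.lastCases with
  | last =>
    induction i using Fin.lastCases with
    | last => exact ⟨hi, rfl⟩
    | cast i =>
      rw [Fin.snoc_castSucc] at hi
      rw [Fin.snoc_last, Fin.snoc_castSucc]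
      have h1 := hp i (Fin.last n) (Fin.le_last i) hi
      have h2 := hx h1.1
      exact ⟨h2.1, by rw [h2.2, h1.2]⟩
  | cast j =>
    induction i using Fin.lastCases with
    | last => exact absurd hij (Fin.castSucc_lt_last j).not_ge
    | cast i =>
      rw [Fin.snoc_castSucc] at hi
      rw [Fin.snoc_castSucc, Fin.snoc_castSucc]
      exact hp i j (Fin.castSucc_le_castSucc_iff.mp hij) hi

private lemma absorb_ae (M : MarkovSetting Ω) (T : Set Ω) (hT : MeasurableSet T)
    (hκT : ∀ ω ∈ T, M.κ ω = Measure.dirac ω) (h : Ω → ℝ≥0∞) (hh : Measurable h) :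
    ∀ t : ℕ, ∀ᵐ u ∂(M.μF t),
      ∀ i j : Fin (t + 1), i ≤ j → u i ∈ T → u j ∈ T ∧ h (u j) = h (u i) := by
  intro t
  induction t with
  | zero =>
    refine Filter.Eventually.of_forall fun u i j hij hi => ?_
    have hji : j = i := Fin.ext (by omega)
    exact ⟨hji ▸ hi, by rw [hji]⟩
  | succ n ih =>
    haveI := probF M n
    haveI := M.markov
    rw [M.step n]
    refine (ae_map_iff (measurable_snocFun n).aemeasurable (measS T hT h hh (n + 1))).mpr ?_
    refine (Measure.ae_compProd_iff ((measurable_snocFun n) (measS T hT h hh (n + 1)))).mpr ?_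
    filter_upwards [ih] with p hp
    by_cases hlast : p (Fin.last n) ∈ T
    · rw [Kernel.comap_apply, hκT _ hlast]
      have hae : ∀ᵐ x ∂(Measure.dirac (p (Fin.last n))),
          x ∈ T ∧ h x = h (p (Fin.last n)) := by
        refine (ae_dirac_iff ?_).mpr ⟨hlast, rfl⟩
        exact hT.inter (hh (measurableSet_singleton _))
      filter_upwards [hae] with x hx
      exact snoc_prop hp (fun _ => hx)
    · refine Filter.Eventually.of_forall fun x => ?_
      exact snoc_prop hp (fun habs => absurd habs hlast)

private lemma pointwise_key (T : Set Ω) (star : Ω) (h : Ω → ℝ≥0∞)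
    (hsupp : Function.support h ⊆ T) (t : ℕ) (v : Fin (t + 1) → Ω)
    (hv : ∀ i j : Fin (t + 1), i ≤ j → v i ∈ T → v j ∈ T ∧ h (v j) = h (v i)) :
    ft star t (lift T h) v * (Lle (liftBranch T h) t).indicator 1 v
      = h (v (Fin.last t)) := by
  classical
  by_cases hex : ∃ n : ℕ, ∃ hn : n < t + 1, v ⟨n, hn⟩ ∈ T
  · obtain ⟨hNlt, hNT⟩ := Nat.find_spec hex
    set N := Nat.find hex with hNdef
    have hmin : ∀ m (hm : m < t + 1), m < N → v ⟨m, hm⟩ ∉ T := by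
      intro m hm hmN hmT
      exact Nat.find_min hex hmN ⟨hm, hmT⟩
    have hlastN := hv ⟨N, hNlt⟩ (Fin.last t) (Fin.le_last _) hNT
    by_cases hz : h (v ⟨N, hNlt⟩) = 0
    · have hnot : v ∉ Lle (liftBranch T h) t := by
        rintro ⟨j, u, hu, hle, hpref⟩
        cases j with
        | zero => simp only [liftBranch] at hu; exact hu
        | succ m =>
          have hmt : m < t + 1 := hle
          simp only [liftBranch, Set.mem_setOf_eq] at hu
          have hvm : v ⟨m, hmt⟩ ∈ T := by
            have := hu.2.1
            rwa [hpref (Fin.last m)] at this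
          have hmN : m = N := by
            rcases lt_trichotomy m N with hlt | hmN | hgt
            · exact absurd hvm (hmin m hmt hlt)
            · exact hmN
            · have h1 := hu.1 ⟨N, by omega⟩ hgt
              rw [hpref ⟨N, by omega⟩] at h1
              exact absurd hNT h1
          have hsuppm : u (Fin.last m) ∈ Function.support h := hu.2.2
          rw [hpref (Fin.last m)] at hsuppm
          subst hmN
          exact absurd hz hsuppm
      rw [Set.indicator_of_notMem hnot, mul_zero, hlastN.2, hz]
    · have hmem : v ∈ Lle (liftBranch T h) t := by
        refine ⟨N + 1, fun k : Fin (N + 1) => v (Fin.castLE (by omega) k), ?_,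
          ⟨by omega, fun k => rfl⟩⟩
        simp only [liftBranch, Set.mem_setOf_eq]
        refine ⟨fun i hi => hmin i (by omega) hi, hNT, hz⟩
      have hft : ft star t (lift T h) v = h (v ⟨N, hNlt⟩) := by
        show lift T h (extendW star v) = _
        rw [lift, tsum_eq_single N]
        · have hmemc : extendW star v ∈ cyl (Tword T N) := by
            refine ⟨fun i hiN => ?_, ?_⟩
            · show extendW star v i ∉ T
              have hit : (i : ℕ) < t + 1 := by omega
              rw [show extendW star v i = v ⟨i, hit⟩ from dif_pos hit]
              exact hmin i hit hiN
            · show extendW star v N ∈ T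
              rw [show extendW star v N = v ⟨N, hNlt⟩ from dif_pos hNlt]
              exact hNT
          rw [Set.indicator_of_mem hmemc, Pi.one_apply, one_mul,
            show extendW star v N = v ⟨N, hNlt⟩ from dif_pos hNlt]
        · intro n hn
          have hnc : extendW star v ∉ cyl (Tword T n) := by
            rcases lt_or_gt_of_ne hn with hlt | hgt
            · intro hc
              have h2 := hc.2
              have hnt : n < t + 1 := by omega
              have he : extendW star v n = v ⟨n, hnt⟩ := dif_pos hnt
              have h2' : extendW star v n ∈ T := h2
              rw [he] at h2'
              exact hmin n hnt hlt h2'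
            · intro hc
              have h1 := hc.1 ⟨N, by omega⟩ hgt
              have h1' : extendW star v N ∉ T := h1
              rw [show extendW star v N = v ⟨N, hNlt⟩ from dif_pos hNlt] at h1'
              exact h1' hNT
          rw [Set.indicator_of_notMem hnc, zero_mul]
      rw [Set.indicator_of_mem hmem, Pi.one_apply, mul_one, hft]
      exact hlastN.2.symm
  · push_neg at hex
    have hnot : v ∉ Lle (liftBranch T h) t := by
      rintro ⟨j, u, hu, hle, hpref⟩
      cases j with
      | zero => simp only [liftBranch] at hu; exact hu
      | succ m =>
        have hmt : m < t + 1 := hle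
        simp only [liftBranch, Set.mem_setOf_eq] at hu
        have := hu.2.1
        rw [hpref (Fin.last m)] at this
        exact hex m hmt this
    rw [Set.indicator_of_notMem hnot, mul_zero]
    have hz : h (v (Fin.last t)) = 0 := by
      by_contra hne
      exact hex t (Nat.lt_succ_self t) (hsupp hne)
    exact hz.symm

/-- **Lifted functions and last-state projections.** -/
theorem lift_last_state
    (M : MarkovSetting Ω) (T : Set Ω) (hT : MeasurableSet T)
    (hκT : ∀ ω ∈ T, M.κ ω = Measure.dirac ω)
    (sc : Ω → ℝ≥0∞) (hsc : Measurable sc) (hsc1 : ∀ x, sc x ≤ 1)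
    (hscT : ∀ ω ∈ T, sc ω = 1) (star : Ω)
    (h : Ω → ℝ≥0∞) (hh : Measurable h) (hsupp : Function.support h ⊆ T) :
    ∀ t : ℕ,
      ∫⁻ u, ft star t (lift T h) u * ((Lle (liftBranch T h) t).indicator 1 u) * wt sc t u
          ∂(M.μF t) =
        ∫⁻ u, h (u (Fin.last t)) * wt sc t u ∂(M.μF t) := by
  intro t
  refine lintegral_congr_ae ?_
  filter_upwards [absorb_ae M T hT hκT h hh t] with v hv
  rw [pointwise_key T star h hsupp t v hv]

end PaperPPG
end
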